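/- arXiv:2204.01161 — 8 statements merged into one kernel-verified Lean document; each statement's English description precedes it below -/
import Mathlib

section
/- For every choice of survival data (any event times Y, censoring indicators Δ, and covariates X), the log partial likelihood L is concave on EuclideanSpace ℝ (Fin p); equivalently, the function β ↦ −L(β) is convex on all of EuclideanSpace ℝ (Fin p). -/
/-!
Each summand of `L` is a linear function of `β` minus `log (c * ∑ j, exp ⟪X j, β⟫)`, and
log-sum-exp is convex: by the weighted Hölder inequality
`∑ exp (a x_j + b y_j) = ∑ (exp x_j) ^ a (exp y_j) ^ b ≤ (∑ exp x_j) ^ a (∑ exp y_j) ^ b`.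
Concavity survives precomposition with the linear map `β ↦ (⟪X j, β⟫)_j`, finite sums and
multiplication by `1 / n ≥ 0`.
-/

open Finset Real

theorem sum_rpow_mul_rpow_le {ι : Type*} (s : Finset ι) {f g : ι → ℝ}
    (hf : ∀ i ∈ s, 0 ≤ f i) (hg : ∀ i ∈ s, 0 ≤ g i) {a b : ℝ} (ha : 0 ≤ a) (hb : 0 ≤ b)
    (hab : a + b = 1) :
    ∑ i ∈ s, f i ^ a * g i ^ b ≤ (∑ i ∈ s, f i) ^ a * (∑ i ∈ s, g i) ^ b := by
  rcases ha.eq_or_lt with rfl | ha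
  · obtain rfl : b = 1 := by linarith
    simp
  rcases hb.eq_or_lt with rfl | hb
  · obtain rfl : a = 1 := by linarith
    simp
  have hpow {c : ℝ} (hc : 0 < c) {h : ι → ℝ} (hh : ∀ i ∈ s, 0 ≤ h i) :
      ∑ i ∈ s, (h i ^ c) ^ c⁻¹ = ∑ i ∈ s, h i :=
    sum_congr rfl fun i hi => rpow_rpow_inv (hh i hi) hc.ne'
  have := inner_le_Lp_mul_Lq_of_nonneg s (HolderConjugate.inv_inv ha hb hab)
    (fun i hi => rpow_nonneg (hf i hi) a) (fun i hi => rpow_nonneg (hg i hi) b)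
  simpa only [one_div, inv_inv, hpow ha hf, hpow hb hg] using this

theorem convexOn_log_sum_exp {ι : Type*} (s : Finset ι) (hs : s.Nonempty) :
    ConvexOn ℝ Set.univ fun x : ι → ℝ => log (∑ i ∈ s, exp (x i)) := by
  refine ⟨convex_univ, fun x _ y _ a b ha hb hab => ?_⟩
  have hpos (z : ι → ℝ) : 0 < ∑ i ∈ s, exp (z i) := sum_pos (fun i _ => exp_pos _) hs
  have hexp (i : ι) : exp ((a • x + b • y) i) = exp (x i) ^ a * exp (y i) ^ b := by
    simp only [Pi.add_apply, Pi.smul_apply, smul_eq_mul, exp_add, ← exp_mul, mul_comm]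
  calc log (∑ i ∈ s, exp ((a • x + b • y) i))
      ≤ log ((∑ i ∈ s, exp (x i)) ^ a * (∑ i ∈ s, exp (y i)) ^ b) := by
        refine log_le_log (hpos _) ?_
        simp only [hexp]
        exact sum_rpow_mul_rpow_le s (fun i _ => (exp_pos _).le) (fun i _ => (exp_pos _).le)
          ha hb hab
    _ = a • log (∑ i ∈ s, exp (x i)) + b • log (∑ i ∈ s, exp (y i)) := by
        rw [log_mul (rpow_pos_of_pos (hpos x) a).ne' (rpow_pos_of_pos (hpos y) b).ne',
          log_rpow (hpos x), log_rpow (hpos y), smul_eq_mul, smul_eq_mul]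

theorem convexOn_log_mul_sum_exp {ι : Type*} (c : ℝ) (s : Finset ι) (hs : s.Nonempty) :
    ConvexOn ℝ Set.univ fun x : ι → ℝ => log (c * ∑ i ∈ s, exp (x i)) := by
  rcases eq_or_ne c 0 with rfl | hc
  · -- `log 0 = 0`
    simpa using convexOn_const 0 convex_univ
  have hsum (x : ι → ℝ) : ∑ i ∈ s, exp (x i) ≠ 0 := (sum_pos (fun i _ => exp_pos _) hs).ne'
  simp only [log_mul hc (hsum _)]
  exact (convexOn_const (log c) convex_univ).add (convexOn_log_sum_exp s hs)

theorem concaveOn_finset_sum {𝕜 E β ι : Type*} [Semiring 𝕜] [PartialOrder 𝕜] [AddCommMonoid E]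
    [AddCommMonoid β] [PartialOrder β] [IsOrderedAddMonoid β] [SMul 𝕜 E] [Module 𝕜 β]
    {s : Set E} (hs : Convex 𝕜 s) (t : Finset ι) {f : ι → E → β}
    (hf : ∀ i ∈ t, ConcaveOn 𝕜 s (f i)) : ConcaveOn 𝕜 s fun x => ∑ i ∈ t, f i x := by
  classical
  induction t using Finset.induction_on with
  | empty => simpa using concaveOn_const 0 hs
  | insert i t hi ih =>
    simp only [sum_insert hi]
    exact (hf i (mem_insert_self i t)).add (ih fun j hj => hf j (mem_insert_of_mem hj))

/-- The Cox log partial likelihood. -/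
noncomputable def coxLogPartialLik (n p : ℕ) (Y : Fin n → ℝ) (Δ : Fin n → Bool)
    (X : Fin n → EuclideanSpace ℝ (Fin p)) (β : EuclideanSpace ℝ (Fin p)) : ℝ :=
  (1 / (n : ℝ)) * ∑ i ∈ Finset.univ.filter (fun i => Δ i = true),
    ((inner ℝ (X i) β : ℝ) -
      Real.log ((1 / (n : ℝ)) * ∑ j ∈ Finset.univ.filter (fun j => Y i ≤ Y j),
        Real.exp (inner ℝ (X j) β : ℝ)))

theorem coxLogPartialLik_concave_general (n p : ℕ)
    (Y : Fin n → ℝ) (Δ : Fin n → Bool) (X : Fin n → EuclideanSpace ℝ (Fin p)) :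
    ConcaveOn ℝ Set.univ (coxLogPartialLik n p Y Δ X) ∧
    ConvexOn ℝ Set.univ
      (fun β : EuclideanSpace ℝ (Fin p) => -coxLogPartialLik n p Y Δ X β) := by
  let scores : EuclideanSpace ℝ (Fin p) →ₗ[ℝ] Fin n → ℝ :=
    LinearMap.pi fun j => (innerSL ℝ (X j)).toLinearMap
  have hterm (i : Fin n) : ConcaveOn ℝ Set.univ fun β : EuclideanSpace ℝ (Fin p) =>
      inner ℝ (X i) β -
        log (1 / n * ∑ j ∈ univ.filter (fun j => Y i ≤ Y j), exp (inner ℝ (X j) β)) :=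
    ((innerSL ℝ (X i)).toLinearMap.concaveOn convex_univ).sub
      ((convexOn_log_mul_sum_exp _ _ ⟨i, by simp⟩).comp_linearMap scores)
  have hL : ConcaveOn ℝ Set.univ (coxLogPartialLik n p Y Δ X) :=
    (concaveOn_finset_sum convex_univ _ fun i _ => hterm i).smul (by positivity)
  exact ⟨hL, hL.neg⟩

/-- For every choice of survival data, the log partial likelihood is concave;
equivalently, `β ↦ -L β` is convex on all of `EuclideanSpace ℝ (Fin p)`. -/
theorem coxLogPartialLik_concave (n p : ℕ) (hn : 1 ≤ n) (hp : 1 ≤ p)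
    (Y : Fin n → ℝ) (Δ : Fin n → Bool) (X : Fin n → EuclideanSpace ℝ (Fin p)) :
    ConcaveOn ℝ Set.univ (coxLogPartialLik n p Y Δ X) ∧
    ConvexOn ℝ Set.univ
      (fun β : EuclideanSpace ℝ (Fin p) => -coxLogPartialLik n p Y Δ X β) :=
  coxLogPartialLik_concave_general n p Y Δ X
end

section
/- Suppose b ∈ EuclideanSpace ℝ (Fin p) is nonzero and satisfies ⟪b, X_j − X_i⟫ ≤ 0 for every pair (i,j) ∈ D. Then for every β and every 0 ≤ s ≤ t one has L(β + s·b) ≤ L(β + t·b), i.e., t ↦ L(β + t·b) is nondecreasing on [0,∞). If moreover ⟪b, X_j − X_i⟫ < 0 for at least one pair (i,j) ∈ D, then L(β + t·b) > L(β) for every β and every t > 0; consequently L has no global maximizer, i.e., the maximum partial likelihood estimator does not exist. -/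
/-!
Dividing the risk-set sum of the `i`-th term by `exp ⟪X i, β⟫` writes it as
`-log ((1/n) ∑ⱼ exp ⟪X j - X i, β⟫)`. Along `β + t • b` each exponent moves with slope
`⟪b, X j - X i⟫ ≤ 0` (zero for `j = i`), so every risk-set sum is antitone in `t`, and strictly
antitone for the event `i` of a strict pair; hence each term, and `L`, is nondecreasing in `t`,
strictly so in the strict case. An increasing ray leaves no room for a global maximizer.
-/

open Finset

open Real

section LogSumExp

variable {ι : Type*} {s : Finset ι} {c t₁ t₂ : ℝ}

theorem sub_log_mul_sum_exp (u : ι → ℝ) (hc : 0 < c) {i : ι} (hi : i ∈ s) :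
    u i - log (c * ∑ j ∈ s, exp (u j)) = -log (c * ∑ j ∈ s, exp (u j - u i)) := by
  have hpos : 0 < c * ∑ j ∈ s, exp (u j - u i) :=
    mul_pos hc (sum_pos (fun j _ => exp_pos _) ⟨i, hi⟩)
  have hsum : ∑ j ∈ s, exp (u j) = (∑ j ∈ s, exp (u j - u i)) * exp (u i) := by
    rw [sum_mul]
    exact sum_congr rfl fun j _ => by rw [← exp_add, sub_add_cancel]
  rw [hsum, ← mul_assoc, log_mul hpos.ne' (exp_pos _).ne', log_exp]
  ring

variable {a d : ι → ℝ}

theorem log_mul_sum_exp_add_mul_le (hc : 0 < c) (hs : s.Nonempty) (hd : ∀ j ∈ s, d j ≤ 0)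
    (ht : t₁ ≤ t₂) :
    log (c * ∑ j ∈ s, exp (a j + t₂ * d j)) ≤ log (c * ∑ j ∈ s, exp (a j + t₁ * d j)) := by
  refine log_le_log (mul_pos hc (sum_pos (fun j _ => exp_pos _) hs)) ?_
  refine mul_le_mul_of_nonneg_left (sum_le_sum fun j hj => ?_) hc.le
  exact exp_le_exp.2 (by nlinarith [hd j hj])

theorem log_mul_sum_exp_add_mul_lt (hc : 0 < c) (hd : ∀ j ∈ s, d j ≤ 0)
    (hneg : ∃ j ∈ s, d j < 0) (ht : t₁ < t₂) :
    log (c * ∑ j ∈ s, exp (a j + t₂ * d j)) < log (c * ∑ j ∈ s, exp (a j + t₁ * d j)) := by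
  obtain ⟨k, hk, hdk⟩ := hneg
  refine log_lt_log (mul_pos hc (sum_pos (fun j _ => exp_pos _) ⟨k, hk⟩)) ?_
  refine mul_lt_mul_of_pos_left (sum_lt_sum (fun j hj => ?_) ⟨k, hk, ?_⟩) hc
  · exact exp_le_exp.2 (by nlinarith [hd j hj])
  · exact exp_lt_exp.2 (by nlinarith)

end LogSumExp

section Cox

variable {n p : ℕ} {Y : Fin n → ℝ} {Δ : Fin n → Bool} {X : Fin n → EuclideanSpace ℝ (Fin p)}
  {b : EuclideanSpace ℝ (Fin p)}

theorem coxLogPartialLik_add_smul (β : EuclideanSpace ℝ (Fin p)) (t : ℝ) :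
    coxLogPartialLik n p Y Δ X (β + t • b) =
      (1 / (n : ℝ)) * ∑ i ∈ univ.filter (fun i => Δ i = true),
        -log ((1 / (n : ℝ)) * ∑ j ∈ univ.filter (fun j => Y i ≤ Y j),
          exp (inner ℝ (X j - X i) β + t * inner ℝ b (X j - X i))) := by
  unfold coxLogPartialLik
  congr 1
  refine sum_congr rfl fun i _ => ?_
  have hc : (0 : ℝ) < 1 / n := by have := i.pos; positivity
  rw [sub_log_mul_sum_exp (fun j => inner ℝ (X j) (β + t • b)) hc (by simp)]
  congr 3
  refine sum_congr rfl fun j _ => ?_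
  simp only [inner_sub_left, inner_sub_right, inner_add_right, real_inner_smul_right,
    real_inner_comm b]
  congr 1
  ring

variable (hle : ∀ i j : Fin n, Δ i = true → Y i ≤ Y j → j ≠ i → inner ℝ b (X j - X i) ≤ 0)
include hle

theorem inner_sub_nonpos_of_riskSet {i : Fin n} (hi : Δ i = true) :
    ∀ j ∈ univ.filter (fun j => Y i ≤ Y j), inner ℝ b (X j - X i) ≤ 0 := by
  intro j hj
  rcases eq_or_ne j i with rfl | hji
  · simp
  · exact hle i j hi (by simpa using hj) hji

theorem coxLogPartialLik_add_smul_le (β : EuclideanSpace ℝ (Fin p)) {t₁ t₂ : ℝ}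
    (ht : t₁ ≤ t₂) :
    coxLogPartialLik n p Y Δ X (β + t₁ • b) ≤ coxLogPartialLik n p Y Δ X (β + t₂ • b) := by
  rw [coxLogPartialLik_add_smul, coxLogPartialLik_add_smul]
  refine mul_le_mul_of_nonneg_left (sum_le_sum fun i hi => neg_le_neg ?_) (by positivity)
  have hc : (0 : ℝ) < 1 / n := by have := i.pos; positivity
  exact log_mul_sum_exp_add_mul_le hc ⟨i, by simp⟩
    (inner_sub_nonpos_of_riskSet hle (by simpa using hi)) ht

theorem coxLogPartialLik_add_smul_lt
    (hlt : ∃ i j : Fin n, Δ i = true ∧ Y i ≤ Y j ∧ j ≠ i ∧ inner ℝ b (X j - X i) < 0)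
    (β : EuclideanSpace ℝ (Fin p)) {t₁ t₂ : ℝ} (ht : t₁ < t₂) :
    coxLogPartialLik n p Y Δ X (β + t₁ • b) < coxLogPartialLik n p Y Δ X (β + t₂ • b) := by
  obtain ⟨i₀, j₀, hi₀, hY, -, hneg⟩ := hlt
  have hc : (0 : ℝ) < 1 / n := by have := i₀.pos; positivity
  rw [coxLogPartialLik_add_smul, coxLogPartialLik_add_smul]
  refine mul_lt_mul_of_pos_left
    (sum_lt_sum (fun i hi => neg_le_neg ?_) ⟨i₀, ?_, neg_lt_neg ?_⟩) hc
  · exact log_mul_sum_exp_add_mul_le hc ⟨i, by simp⟩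
      (inner_sub_nonpos_of_riskSet hle (by simpa using hi)) ht.le
  · simpa using hi₀
  · exact log_mul_sum_exp_add_mul_lt hc (inner_sub_nonpos_of_riskSet hle hi₀)
      ⟨j₀, by simpa using hY, hneg⟩ ht

end Cox

theorem coxLogPartialLik_monotone_direction_general (n p : ℕ)
    (Y : Fin n → ℝ) (Δ : Fin n → Bool) (X : Fin n → EuclideanSpace ℝ (Fin p))
    (b : EuclideanSpace ℝ (Fin p))
    (hle : ∀ i j : Fin n, Δ i = true → Y i ≤ Y j → j ≠ i →
      (inner ℝ b (X j - X i) : ℝ) ≤ 0) :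
    (∀ (β : EuclideanSpace ℝ (Fin p)) (s t : ℝ), 0 ≤ s → s ≤ t →
      coxLogPartialLik n p Y Δ X (β + s • b) ≤ coxLogPartialLik n p Y Δ X (β + t • b)) ∧
    ((∃ i j : Fin n, Δ i = true ∧ Y i ≤ Y j ∧ j ≠ i ∧ (inner ℝ b (X j - X i) : ℝ) < 0) →
      (∀ (β : EuclideanSpace ℝ (Fin p)) (t : ℝ), 0 < t →
        coxLogPartialLik n p Y Δ X β < coxLogPartialLik n p Y Δ X (β + t • b)) ∧
      ¬ ∃ βhat : EuclideanSpace ℝ (Fin p), ∀ β : EuclideanSpace ℝ (Fin p),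
          coxLogPartialLik n p Y Δ X β ≤ coxLogPartialLik n p Y Δ X βhat) := by
  refine ⟨fun β s t _ hst => coxLogPartialLik_add_smul_le hle β hst, fun hlt => ?_⟩
  have hincr : ∀ β (t : ℝ), 0 < t →
      coxLogPartialLik n p Y Δ X β < coxLogPartialLik n p Y Δ X (β + t • b) := by
    intro β t ht
    simpa using coxLogPartialLik_add_smul_lt hle hlt β ht
  refine ⟨hincr, fun ⟨βhat, hmax⟩ => ?_⟩
  exact (hmax (βhat + (1 : ℝ) • b)).not_gt (hincr βhat 1 one_pos)

/-- If a nonzero direction `b` satisfies `⟪b, X j - X i⟫ ≤ 0` for every pair in the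
comparison set `D = {(i,j) : Δ i = 1, Y j ≥ Y i, j ≠ i}`, then `t ↦ L (β + t • b)` is
nondecreasing on `[0, ∞)` for every `β`.  If moreover the inequality is strict for at
least one pair in `D`, then `L (β + t • b) > L β` for every `β` and every `t > 0`, and
consequently the MPLE (a global maximizer of `L`) does not exist. -/
theorem coxLogPartialLik_monotone_direction (n p : ℕ) (hn : 1 ≤ n) (hp : 1 ≤ p)
    (Y : Fin n → ℝ) (Δ : Fin n → Bool) (X : Fin n → EuclideanSpace ℝ (Fin p))
    (b : EuclideanSpace ℝ (Fin p)) (hb : b ≠ 0)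
    (hle : ∀ i j : Fin n, Δ i = true → Y i ≤ Y j → j ≠ i →
      (inner ℝ b (X j - X i) : ℝ) ≤ 0) :
    (∀ (β : EuclideanSpace ℝ (Fin p)) (s t : ℝ), 0 ≤ s → s ≤ t →
      coxLogPartialLik n p Y Δ X (β + s • b) ≤ coxLogPartialLik n p Y Δ X (β + t • b)) ∧
    ((∃ i j : Fin n, Δ i = true ∧ Y i ≤ Y j ∧ j ≠ i ∧ (inner ℝ b (X j - X i) : ℝ) < 0) →
      (∀ (β : EuclideanSpace ℝ (Fin p)) (t : ℝ), 0 < t →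
        coxLogPartialLik n p Y Δ X β < coxLogPartialLik n p Y Δ X (β + t • b)) ∧
      ¬ ∃ βhat : EuclideanSpace ℝ (Fin p), ∀ β : EuclideanSpace ℝ (Fin p),
          coxLogPartialLik n p Y Δ X β ≤ coxLogPartialLik n p Y Δ X βhat) :=
  coxLogPartialLik_monotone_direction_general n p Y Δ X b hle
end

section
/- Suppose that for every nonzero b ∈ EuclideanSpace ℝ (Fin p) there exists a pair (i,j) ∈ D with ⟪b, X_j − X_i⟫ > 0. Then the log partial likelihood attains its global maximum: there exists β̂ ∈ EuclideanSpace ℝ (Fin p) such that L(β̂) ≥ L(β) for all β, i.e., the maximum partial likelihood estimator exists. -/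
/-!
Each summand of the log partial likelihood is at most `log n - ⟪β, X j - X i⟫` for every `j` in
the risk set of `i`, since the inner sum dominates its `j`-th term. The hypothesis says that the
finitely many linear forms `β ↦ ⟪β, X j - X i⟫`, `(i, j) ∈ D`, have a positive maximum on the unit
sphere, so by compactness and homogeneity one of them is at least `c ‖β‖` for some `c > 0`. Hence
`L β ≤ C - (c / n) ‖β‖` tends to `-∞` at infinity, and the continuous function `L` attains its
maximum.
-/

open Finset

open Filter

lemma Real.le_log_sum_exp {ι : Type*} {s : Finset ι} {j : ι} (hj : j ∈ s) (f : ι → ℝ) :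
    f j ≤ Real.log (∑ k ∈ s, Real.exp (f k)) := by
  rw [Real.le_log_iff_exp_le (Finset.sum_pos (fun k _ => Real.exp_pos _) ⟨j, hj⟩)]
  exact Finset.single_le_sum (fun k _ => (Real.exp_pos (f k)).le) hj

lemma exists_pos_mul_norm_le_inner {E ι : Type*} [NormedAddCommGroup E] [InnerProductSpace ℝ E]
    [FiniteDimensional ℝ E] (s : Finset ι) (v : ι → E)
    (h : ∀ b : E, b ≠ 0 → ∃ k ∈ s, 0 < (inner ℝ b (v k) : ℝ)) :
    ∃ c > 0, ∀ b : E, b ≠ 0 → ∃ k ∈ s, c * ‖b‖ ≤ (inner ℝ b (v k) : ℝ) := by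
  rcases subsingleton_or_nontrivial E with _ | _
  · exact ⟨1, one_pos, fun b hb => (hb (Subsingleton.elim b 0)).elim⟩
  obtain ⟨b₀, hb₀⟩ := exists_ne (0 : E)
  have hs : s.Nonempty := let ⟨k, hk, _⟩ := h b₀ hb₀; ⟨k, hk⟩
  set g : E → ℝ := fun b => s.sup' hs fun k => (inner ℝ b (v k) : ℝ)
  have hg : Continuous g :=
    Continuous.finset_sup'_apply hs fun k _ => continuous_id.inner continuous_const
  obtain ⟨u, hu, hmin⟩ := (isCompact_sphere (0 : E) 1).exists_isMinOn
    (NormedSpace.sphere_nonempty.2 zero_le_one) hg.continuousOn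
  have hu0 : u ≠ 0 := ne_zero_of_mem_unit_sphere ⟨u, hu⟩
  refine ⟨g u, ?_, fun b hb => ?_⟩
  · obtain ⟨k, hk, hpos⟩ := h u hu0
    exact hpos.trans_le (Finset.le_sup' (fun k => (inner ℝ u (v k) : ℝ)) hk)
  · have hbn : 0 < ‖b‖ := norm_pos_iff.2 hb
    have hunit : ‖b‖⁻¹ • b ∈ Metric.sphere (0 : E) 1 := by
      simp [norm_smul, hbn.ne']
    obtain ⟨k, hk, hkmax⟩ := Finset.exists_mem_eq_sup' hs fun k => (inner ℝ (‖b‖⁻¹ • b) (v k) : ℝ)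
    refine ⟨k, hk, ?_⟩
    have hle : g u ≤ ‖b‖⁻¹ * (inner ℝ b (v k) : ℝ) := by
      rw [← real_inner_smul_left, ← hkmax]
      exact hmin hunit
    rwa [le_inv_mul_iff₀ hbn, mul_comm] at hle

section Cox

variable {n p : ℕ} (Y : Fin n → ℝ) (Δ : Fin n → Bool) (X : Fin n → EuclideanSpace ℝ (Fin p))

lemma continuous_coxLogPartialLik : Continuous (coxLogPartialLik n p Y Δ X) := by
  unfold coxLogPartialLik
  refine continuous_const.mul (continuous_finsetSum _ fun i _ => ?_)
  refine (continuous_const.inner continuous_id).sub (Continuous.log ?_ fun β => ?_)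
  · exact continuous_const.mul (continuous_finsetSum _ fun j _ =>
      Real.continuous_exp.comp (continuous_const.inner continuous_id))
  · have hn : (0 : ℝ) < n := by exact_mod_cast i.pos
    exact (mul_pos (by positivity)
      (Finset.sum_pos (fun j _ => Real.exp_pos _) ⟨i, by simp⟩)).ne'

lemma coxLogPartialLik_term_le {i j : Fin n} (hij : Y i ≤ Y j) (β : EuclideanSpace ℝ (Fin p)) :
    (inner ℝ (X i) β : ℝ) -
        Real.log ((1 / (n : ℝ)) * ∑ k ∈ Finset.univ.filter (fun k => Y i ≤ Y k),
          Real.exp (inner ℝ (X k) β : ℝ))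
      ≤ Real.log n - (inner ℝ β (X j - X i) : ℝ) := by
  have hn : (0 : ℝ) < n := by exact_mod_cast i.pos
  have hS : 0 < ∑ k ∈ Finset.univ.filter (fun k => Y i ≤ Y k), Real.exp (inner ℝ (X k) β : ℝ) :=
    Finset.sum_pos (fun k _ => Real.exp_pos _) ⟨i, by simp⟩
  have hj := Real.le_log_sum_exp (s := Finset.univ.filter (fun k => Y i ≤ Y k))
    (by simpa using hij) fun k => (inner ℝ (X k) β : ℝ)
  rw [Real.log_mul (by positivity) hS.ne', one_div, Real.log_inv, inner_sub_right,
    real_inner_comm (X j), real_inner_comm (X i)]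
  linarith

lemma coxLogPartialLik_le {i j : Fin n} (hi : Δ i = true) (hij : Y i ≤ Y j)
    (β : EuclideanSpace ℝ (Fin p)) :
    coxLogPartialLik n p Y Δ X β ≤ (1 / (n : ℝ)) *
      ((#(Finset.univ.filter (fun i => Δ i = true)) : ℝ) * Real.log n - inner ℝ β (X j - X i)) := by
  unfold coxLogPartialLik
  gcongr
  calc _ ≤ ∑ k ∈ Finset.univ.filter (fun i => Δ i = true),
          (Real.log n - if k = i then (inner ℝ β (X j - X i) : ℝ) else 0) := by
        refine Finset.sum_le_sum fun k _ => ?_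
        split_ifs with hk
        · subst hk; exact coxLogPartialLik_term_le Y X hij β
        · simpa using coxLogPartialLik_term_le Y X (le_refl (Y k)) β
    _ = _ := by simp [Finset.sum_sub_distrib, hi]

lemma tendsto_coxLogPartialLik_cocompact
    (hcond : ∀ b : EuclideanSpace ℝ (Fin p), b ≠ 0 →
      ∃ i j : Fin n, Δ i = true ∧ Y i ≤ Y j ∧ j ≠ i ∧ 0 < (inner ℝ b (X j - X i) : ℝ)) :
    Tendsto (coxLogPartialLik n p Y Δ X) (cocompact _) atBot := by
  rcases subsingleton_or_nontrivial (EuclideanSpace ℝ (Fin p)) with _ | _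
  · simp [cocompact_eq_bot]
  set D := (Finset.univ : Finset (Fin n × Fin n)).filter
    fun q => Δ q.1 = true ∧ Y q.1 ≤ Y q.2 ∧ q.2 ≠ q.1
  obtain ⟨c, hc, hcD⟩ := exists_pos_mul_norm_le_inner D (fun q => X q.2 - X q.1) fun b hb => by
    obtain ⟨i, j, hi, hij, hji, hpos⟩ := hcond b hb
    exact ⟨(i, j), by simp [D, hi, hij, hji], hpos⟩
  have hn : (0 : ℝ) < n := by
    obtain ⟨b, hb⟩ := exists_ne (0 : EuclideanSpace ℝ (Fin p))
    obtain ⟨i, -⟩ := hcond b hb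
    exact_mod_cast i.pos
  set m : ℝ := (#(Finset.univ.filter (fun i => Δ i = true)) : ℝ)
  have hlim : Tendsto (fun β : EuclideanSpace ℝ (Fin p) => m * Real.log n / n - c / n * ‖β‖)
      (cocompact _) atBot := by
    simpa only [sub_eq_add_neg, Function.comp_def] using tendsto_atBot_add_const_left _ _
      (tendsto_neg_atTop_atBot.comp (tendsto_norm_cocompact_atTop.const_mul_atTop (div_pos hc hn)))
  refine tendsto_atBot_mono' _ ?_ hlim
  filter_upwards [tendsto_norm_cocompact_atTop.eventually_gt_atTop 0] with β hβ
  obtain ⟨q, hq, hcq⟩ := hcD β (norm_pos_iff.1 hβ)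
  have hqD : Δ q.1 = true ∧ Y q.1 ≤ Y q.2 ∧ q.2 ≠ q.1 := by simpa [D] using hq
  calc coxLogPartialLik n p Y Δ X β
      ≤ (1 / (n : ℝ)) * (m * Real.log n - inner ℝ β (X q.2 - X q.1)) :=
        coxLogPartialLik_le Y Δ X hqD.1 hqD.2.1 β
    _ ≤ (1 / (n : ℝ)) * (m * Real.log n - c * ‖β‖) := by gcongr
    _ = _ := by ring

end Cox

theorem coxLogPartialLik_exists_max_general (n p : ℕ)
    (Y : Fin n → ℝ) (Δ : Fin n → Bool) (X : Fin n → EuclideanSpace ℝ (Fin p))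
    (hcond : ∀ b : EuclideanSpace ℝ (Fin p), b ≠ 0 →
      ∃ i j : Fin n, Δ i = true ∧ Y i ≤ Y j ∧ j ≠ i ∧ 0 < (inner ℝ b (X j - X i) : ℝ)) :
    ∃ βhat : EuclideanSpace ℝ (Fin p), ∀ β : EuclideanSpace ℝ (Fin p),
      coxLogPartialLik n p Y Δ X β ≤ coxLogPartialLik n p Y Δ X βhat :=
  (continuous_coxLogPartialLik Y Δ X).exists_forall_ge
    (tendsto_coxLogPartialLik_cocompact Y Δ X hcond)

/-- If for every nonzero `b` there is a pair `(i, j)` in the comparison set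
`D = {(i,j) : Δ i = 1, Y j ≥ Y i, j ≠ i}` with `⟪b, X j - X i⟫ > 0`, then the log
partial likelihood attains its global maximum: the MPLE exists. -/
theorem coxLogPartialLik_exists_max (n p : ℕ) (hn : 1 ≤ n) (hp : 1 ≤ p)
    (Y : Fin n → ℝ) (Δ : Fin n → Bool) (X : Fin n → EuclideanSpace ℝ (Fin p))
    (hcond : ∀ b : EuclideanSpace ℝ (Fin p), b ≠ 0 →
      ∃ i j : Fin n, Δ i = true ∧ Y i ≤ Y j ∧ j ≠ i ∧ 0 < (inner ℝ b (X j - X i) : ℝ)) :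
    ∃ βhat : EuclideanSpace ℝ (Fin p), ∀ β : EuclideanSpace ℝ (Fin p),
      coxLogPartialLik n p Y Δ X β ≤ coxLogPartialLik n p Y Δ X βhat :=
  coxLogPartialLik_exists_max_general n p Y Δ X hcond
end

section
/- Suppose the vectors {X_j − X_i : (i,j) ∈ D} span EuclideanSpace ℝ (Fin p). Then the log partial likelihood L is strictly concave on EuclideanSpace ℝ (Fin p); in particular L has at most one global maximizer, so the maximum partial likelihood estimator, if it exists, is unique. -/
/-!
Each summand of the log partial likelihood is an affine function of `β` minus a log-sum-exp
`β ↦ log (c * ∑ j ∈ R, exp ⟪X j, β⟫)` over a risk set `R = {j | Y i ≤ Y j}`, which is convex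
by Hölder's inequality `∑ f ^ t * g ^ u ≤ (∑ f) ^ t * (∑ g) ^ u` (`t + u = 1`). Hölder is strict
unless `f` and `g` are proportional on `R`, and along the segment from `β₂` to `β₁`
proportionality means `⟪X j - X k, β₁ - β₂⟫ = 0` for all `j, k ∈ R`. For `β₁ ≠ β₂` the
spanning hypothesis provides `(i, j) ∈ D` with `⟪X j - X i, β₁ - β₂⟫ ≠ 0`; both `i` and `j` lie
in the risk set of `i`, so the `i`-th summand is strictly concave along the segment, and hence
so is the sum.
-/

open Finset

open Real
open scoped RealInnerProductSpace

namespace Real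

variable {ι : Type*} {s : Finset ι} {f g : ι → ℝ} {t u : ℝ}

lemma sum_rpow_mul_rpow_eq_mul_sum_div (hf : ∀ j ∈ s, 0 ≤ f j) (hg : ∀ j ∈ s, 0 ≤ g j)
    (hA : 0 < ∑ j ∈ s, f j) (hB : 0 < ∑ j ∈ s, g j) :
    ∑ j ∈ s, f j ^ t * g j ^ u = (∑ j ∈ s, f j) ^ t * (∑ j ∈ s, g j) ^ u *
      ∑ j ∈ s, (f j / ∑ i ∈ s, f i) ^ t * (g j / ∑ i ∈ s, g i) ^ u := by
  rw [mul_sum]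
  refine sum_congr rfl fun j hj => ?_
  rw [div_rpow (hf j hj) hA.le, div_rpow (hg j hj) hB.le]
  field_simp

lemma sum_mul_div_sum_add_mul_div_sum (hA : ∑ j ∈ s, f j ≠ 0) (hB : ∑ j ∈ s, g j ≠ 0)
    (htu : t + u = 1) :
    ∑ j ∈ s, (t * (f j / ∑ i ∈ s, f i) + u * (g j / ∑ i ∈ s, g i)) = 1 := by
  rw [sum_add_distrib, ← mul_sum, ← mul_sum, ← sum_div, ← sum_div, div_self hA, div_self hB,
    mul_one, mul_one, htu]

theorem sum_rpow_mul_rpow_le (hs : s.Nonempty) (hf : ∀ j ∈ s, 0 < f j) (hg : ∀ j ∈ s, 0 < g j)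
    (ht : 0 ≤ t) (hu : 0 ≤ u) (htu : t + u = 1) :
    ∑ j ∈ s, f j ^ t * g j ^ u ≤ (∑ j ∈ s, f j) ^ t * (∑ j ∈ s, g j) ^ u := by
  have hA := sum_pos hf hs
  have hB := sum_pos hg hs
  rw [sum_rpow_mul_rpow_eq_mul_sum_div (fun j hj => (hf j hj).le) (fun j hj => (hg j hj).le) hA hB]
  calc _ ≤ (∑ j ∈ s, f j) ^ t * (∑ j ∈ s, g j) ^ u *
        ∑ j ∈ s, (t * (f j / ∑ i ∈ s, f i) + u * (g j / ∑ i ∈ s, g i)) := by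
        gcongr with j hj
        have := hf j hj
        have := hg j hj
        exact geom_mean_le_arith_mean2_weighted ht hu (by positivity) (by positivity) htu
    _ = _ := by rw [sum_mul_div_sum_add_mul_div_sum hA.ne' hB.ne' htu, mul_one]

theorem sum_rpow_mul_rpow_lt {j k : ι} (hj : j ∈ s) (hk : k ∈ s) (hf : ∀ j ∈ s, 0 < f j)
    (hg : ∀ j ∈ s, 0 < g j) (hjk : f j * g k ≠ f k * g j)
    (ht : 0 < t) (hu : 0 < u) (htu : t + u = 1) :
    ∑ j ∈ s, f j ^ t * g j ^ u < (∑ j ∈ s, f j) ^ t * (∑ j ∈ s, g j) ^ u := by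
  set A := ∑ j ∈ s, f j
  set B := ∑ j ∈ s, g j
  have hA : 0 < A := sum_pos hf ⟨j, hj⟩
  have hB : 0 < B := sum_pos hg ⟨j, hj⟩
  obtain ⟨i, hi, hfgi⟩ : ∃ i ∈ s, f i / A ≠ g i / B := by
    by_contra! h
    have ej := (div_eq_div_iff hA.ne' hB.ne').1 (h j hj)
    have ek := (div_eq_div_iff hA.ne' hB.ne').1 (h k hk)
    exact hjk (mul_right_cancel₀ (mul_ne_zero hA.ne' hB.ne') (by
      linear_combination (g k * A) * ej - (g j * A) * ek))
  rw [sum_rpow_mul_rpow_eq_mul_sum_div (fun j hj => (hf j hj).le) (fun j hj => (hg j hj).le) hA hB]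
  calc _ < A ^ t * B ^ u * ∑ j ∈ s, (t * (f j / A) + u * (g j / B)) := by
        refine mul_lt_mul_of_pos_left (sum_lt_sum (fun j hj => ?_) ⟨i, hi, ?_⟩) (by positivity)
        · have := hf j hj
          have := hg j hj
          exact geom_mean_le_arith_mean2_weighted ht.le hu.le (by positivity) (by positivity) htu
        · have := hf i hi
          have := hg i hi
          exact (geom_mean_lt_arith_mean2_weighted_iff_of_pos ht hu (by positivity)
            (by positivity) htu).2 hfgi
    _ = _ := by rw [sum_mul_div_sum_add_mul_div_sum hA.ne' hB.ne' htu, mul_one]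

lemma log_rpow_mul_rpow {a b : ℝ} (ha : 0 < a) (hb : 0 < b) :
    log (a ^ t * b ^ u) = t * log a + u * log b := by
  rw [log_mul (by positivity) (by positivity), log_rpow ha, log_rpow hb]

end Real

lemma exists_inner_ne_zero_of_span_eq_top {𝕜 E : Type*} [RCLike 𝕜] [NormedAddCommGroup E]
    [InnerProductSpace 𝕜 E] {T : Set E} (hT : Submodule.span 𝕜 T = ⊤) {d : E} (hd : d ≠ 0) :
    ∃ v ∈ T, inner 𝕜 v d ≠ 0 := by
  by_contra! h
  have hle : Submodule.span 𝕜 T ≤ (𝕜 ∙ d)ᗮ := Submodule.span_le.2 fun v hv =>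
    Submodule.mem_orthogonal_singleton_iff_inner_left.2 (h v hv)
  have hd' : d ∈ (𝕜 ∙ d)ᗮ := hle (hT ▸ Submodule.mem_top)
  exact hd (inner_self_eq_zero.1 (Submodule.mem_orthogonal_singleton_iff_inner_left.1 hd'))

section LogSumExp

variable {ι E : Type*} [NormedAddCommGroup E] [InnerProductSpace ℝ E] {s : Finset ι} {c t u : ℝ}

lemma mul_sum_exp_inner_smul_add_smul (x : ι → E) (hc : 0 ≤ c) (htu : t + u = 1) (β₁ β₂ : E) :
    c * ∑ j ∈ s, exp ⟪x j, t • β₁ + u • β₂⟫ =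
      ∑ j ∈ s, (c * exp ⟪x j, β₁⟫) ^ t * (c * exp ⟪x j, β₂⟫) ^ u := by
  rw [mul_sum]
  refine sum_congr rfl fun j _ => ?_
  rw [mul_rpow hc (exp_pos _).le, mul_rpow hc (exp_pos _).le, ← exp_mul, ← exp_mul,
    inner_add_right, real_inner_smul_right, real_inner_smul_right, exp_add,
    mul_mul_mul_comm, ← rpow_add' hc (by rw [htu]; exact one_ne_zero), htu, rpow_one,
    mul_comm ⟪x j, β₁⟫, mul_comm ⟪x j, β₂⟫]

theorem convexOn_log_mul_sum_exp_inner (x : ι → E) (hc : 0 < c) (hs : s.Nonempty) :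
    ConvexOn ℝ Set.univ fun β => log (c * ∑ j ∈ s, exp ⟪x j, β⟫) := by
  refine ⟨convex_univ, fun β₁ _ β₂ _ t u ht hu htu => ?_⟩
  simp only [smul_eq_mul]
  rw [mul_sum_exp_inner_smul_add_smul x hc.le htu, mul_sum, mul_sum,
    ← log_rpow_mul_rpow (sum_pos (fun j _ => by positivity) hs)
      (sum_pos (fun j _ => by positivity) hs)]
  exact log_le_log (sum_pos (fun j _ => by positivity) hs)
    (sum_rpow_mul_rpow_le hs (fun j _ => by positivity) (fun j _ => by positivity) ht hu htu)

theorem log_mul_sum_exp_inner_lt (x : ι → E) (hc : 0 < c) {j k : ι} (hj : j ∈ s) (hk : k ∈ s)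
    {β₁ β₂ : E} (hjk : ⟪x j - x k, β₁ - β₂⟫ ≠ 0) (ht : 0 < t) (hu : 0 < u) (htu : t + u = 1) :
    log (c * ∑ j ∈ s, exp ⟪x j, t • β₁ + u • β₂⟫) <
      t * log (c * ∑ j ∈ s, exp ⟪x j, β₁⟫) + u * log (c * ∑ j ∈ s, exp ⟪x j, β₂⟫) := by
  have hprop : c * exp ⟪x j, β₁⟫ * (c * exp ⟪x k, β₂⟫) ≠
      c * exp ⟪x k, β₁⟫ * (c * exp ⟪x j, β₂⟫) := by
    intro h
    have hexp : exp (⟪x j, β₁⟫ + ⟪x k, β₂⟫) = exp (⟪x k, β₁⟫ + ⟪x j, β₂⟫) := by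
      rw [exp_add, exp_add]
      exact mul_left_cancel₀ (mul_pos hc hc).ne' (by linear_combination h)
    apply hjk
    simp only [inner_sub_left, inner_sub_right]
    linarith [exp_injective hexp]
  rw [mul_sum_exp_inner_smul_add_smul x hc.le htu, mul_sum, mul_sum,
    ← log_rpow_mul_rpow (sum_pos (fun j _ => by positivity) ⟨j, hj⟩)
      (sum_pos (fun j _ => by positivity) ⟨j, hj⟩)]
  exact log_lt_log (sum_pos (fun j _ => by positivity) ⟨j, hj⟩)
    (sum_rpow_mul_rpow_lt hj hk (fun j _ => by positivity) (fun j _ => by positivity) hprop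
      ht hu htu)

end LogSumExp

theorem coxLogPartialLik_strictConcaveOn {n p : ℕ} {Y : Fin n → ℝ} {Δ : Fin n → Bool}
    {X : Fin n → EuclideanSpace ℝ (Fin p)}
    (hspan : Submodule.span ℝ
      {v : EuclideanSpace ℝ (Fin p) |
        ∃ i j : Fin n, Δ i = true ∧ Y i ≤ Y j ∧ j ≠ i ∧ v = X j - X i} = ⊤) :
    StrictConcaveOn ℝ Set.univ (coxLogPartialLik n p Y Δ X) := by
  refine ⟨convex_univ, fun β₁ _ β₂ _ hne t u ht hu htu => ?_⟩
  obtain ⟨_, ⟨i₀, j₀, hΔ, hY, -, rfl⟩, hij⟩ :=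
    exists_inner_ne_zero_of_span_eq_top hspan (sub_ne_zero.2 hne)
  have hc : (0 : ℝ) < 1 / n := by have := i₀.pos; positivity
  have hR : ∀ i : Fin n, i ∈ univ.filter (fun j => Y i ≤ Y j) := fun i => by simp
  set g : Fin n → EuclideanSpace ℝ (Fin p) → ℝ := fun i β =>
    ⟪X i, β⟫ - log (1 / n * ∑ j ∈ univ.filter (fun j => Y i ≤ Y j), exp ⟪X j, β⟫) with hg
  have hlin : ∀ v : EuclideanSpace ℝ (Fin p),
      ⟪v, t • β₁ + u • β₂⟫ = t * ⟪v, β₁⟫ + u * ⟪v, β₂⟫ := fun v => by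
    rw [inner_add_right, real_inner_smul_right, real_inner_smul_right]
  have hle : ∀ i, t * g i β₁ + u * g i β₂ ≤ g i (t • β₁ + u • β₂) := fun i => by
    have := (convexOn_log_mul_sum_exp_inner X hc ⟨i, hR i⟩).2 (Set.mem_univ β₁)
      (Set.mem_univ β₂) ht.le hu.le htu
    simp only [hg, smul_eq_mul] at this ⊢
    linarith [hlin (X i)]
  have hlt : t * g i₀ β₁ + u * g i₀ β₂ < g i₀ (t • β₁ + u • β₂) := by
    have := log_mul_sum_exp_inner_lt X hc (by simpa using hY) (hR i₀) hij ht hu htu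
    simp only [hg]
    linarith [hlin (X i₀)]
  calc t • coxLogPartialLik n p Y Δ X β₁ + u • coxLogPartialLik n p Y Δ X β₂
      = 1 / n * ∑ i ∈ univ.filter (fun i => Δ i = true), (t * g i β₁ + u * g i β₂) := by
        simp only [coxLogPartialLik, hg, smul_eq_mul, sum_add_distrib, ← mul_sum]
        ring
    _ < 1 / n * ∑ i ∈ univ.filter (fun i => Δ i = true), g i (t • β₁ + u • β₂) :=
        mul_lt_mul_of_pos_left (sum_lt_sum (fun i _ => hle i) ⟨i₀, by simpa using hΔ, hlt⟩) hc

theorem coxLogPartialLik_strictConcave_general (n p : ℕ)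
    (Y : Fin n → ℝ) (Δ : Fin n → Bool) (X : Fin n → EuclideanSpace ℝ (Fin p))
    (hspan : Submodule.span ℝ
      {v : EuclideanSpace ℝ (Fin p) |
        ∃ i j : Fin n, Δ i = true ∧ Y i ≤ Y j ∧ j ≠ i ∧ v = X j - X i} = ⊤) :
    StrictConcaveOn ℝ Set.univ (coxLogPartialLik n p Y Δ X) ∧
    ∀ β₁ β₂ : EuclideanSpace ℝ (Fin p),
      (∀ β, coxLogPartialLik n p Y Δ X β ≤ coxLogPartialLik n p Y Δ X β₁) →
      (∀ β, coxLogPartialLik n p Y Δ X β ≤ coxLogPartialLik n p Y Δ X β₂) →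
      β₁ = β₂ := by
  have hL := coxLogPartialLik_strictConcaveOn hspan
  exact ⟨hL, fun β₁ β₂ h₁ h₂ =>
    hL.eq_of_isMaxOn (fun β _ => h₁ β) (fun β _ => h₂ β) trivial trivial⟩

/-- If the difference vectors `{X j - X i : (i,j) ∈ D}` over the comparison set
`D = {(i,j) : Δ i = 1, Y j ≥ Y i, j ≠ i}` span `EuclideanSpace ℝ (Fin p)`, then the log
partial likelihood is strictly concave; in particular the MPLE, if it exists, is unique. -/
theorem coxLogPartialLik_strictConcave (n p : ℕ) (hn : 1 ≤ n) (hp : 1 ≤ p)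
    (Y : Fin n → ℝ) (Δ : Fin n → Bool) (X : Fin n → EuclideanSpace ℝ (Fin p))
    (hspan : Submodule.span ℝ
      {v : EuclideanSpace ℝ (Fin p) |
        ∃ i j : Fin n, Δ i = true ∧ Y i ≤ Y j ∧ j ≠ i ∧ v = X j - X i} = ⊤) :
    StrictConcaveOn ℝ Set.univ (coxLogPartialLik n p Y Δ X) ∧
    ∀ β₁ β₂ : EuclideanSpace ℝ (Fin p),
      (∀ β, coxLogPartialLik n p Y Δ X β ≤ coxLogPartialLik n p Y Δ X β₁) →
      (∀ β, coxLogPartialLik n p Y Δ X β ≤ coxLogPartialLik n p Y Δ X β₂) →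
      β₁ = β₂ :=
  coxLogPartialLik_strictConcave_general n p Y Δ X hspan
end

section
/- Assume that the vectors {q_i − q_j : (i,j) ∈ D} span EuclideanSpace ℝ (Fin p). Then the following are equivalent: (i) there exists b ∈ EuclideanSpace ℝ (Fin p) with every coordinate of b in [−1,1], with ⟪b, q_i − q_j⟫ ≥ 0 for all (i,j) ∈ D, and with Σ_{(i,j)∈D} a_{ij}·⟪b, q_i − q_j⟫ > 0 (i.e., the optimal value of the linear program is strictly positive); (ii) there exists a nonzero b ∈ EuclideanSpace ℝ (Fin p) with ⟪b, q_i − q_j⟫ ≥ 0 for all (i,j) ∈ D. -/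
open Finset
open scoped RealInnerProductSpace

/-!
A nonzero feasible `b` cannot be orthogonal to all the difference vectors, since they span the
space; so one constraint is strict, and rescaling `b` into the unit ball (hence into the cube
`[-1,1]^p`) gives a feasible point of strictly positive objective value.
-/

section InnerProductSpace

variable {E : Type*} [NormedAddCommGroup E] [InnerProductSpace ℝ E] {s : Set E}

theorem eq_zero_of_forall_inner_eq_zero_of_span_eq_top (hs : Submodule.span ℝ s = ⊤) {b : E}
    (hb : ∀ v ∈ s, ⟪b, v⟫ = 0) : b = 0 :=
  inner_self_eq_zero.mp (LinearMap.congr_fun (LinearMap.ext_on hs hb : innerₛₗ ℝ b = 0) b)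

theorem exists_inner_pos_of_span_eq_top (hs : Submodule.span ℝ s = ⊤) {b : E} (hb : b ≠ 0)
    (hnonneg : ∀ v ∈ s, 0 ≤ ⟪b, v⟫) : ∃ v ∈ s, 0 < ⟪b, v⟫ := by
  by_contra! h
  exact hb (eq_zero_of_forall_inner_eq_zero_of_span_eq_top hs
    fun v hv => le_antisymm (h v hv) (hnonneg v hv))

end InnerProductSpace

theorem EuclideanSpace.apply_mem_Icc_of_norm_le_one {ι : Type*} [Fintype ι]
    {x : EuclideanSpace ℝ ι} (hx : ‖x‖ ≤ 1) (k : ι) : x k ∈ Set.Icc (-1 : ℝ) 1 :=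
  abs_le.mp ((Real.norm_eq_abs (x k) ▸ PiLp.norm_apply_le x k).trans hx)

theorem lp_positive_iff_nonzero_feasible_general (n p : ℕ)
    (q : Fin n → EuclideanSpace ℝ (Fin p))
    (D : Finset (Fin n × Fin n))
    (a : Fin n × Fin n → ℝ) (ha : ∀ pr ∈ D, 0 < a pr)
    (hspan : Submodule.span ℝ
      {v : EuclideanSpace ℝ (Fin p) | ∃ pr ∈ D, v = q pr.1 - q pr.2} = ⊤) :
    (∃ b : EuclideanSpace ℝ (Fin p),
        (∀ k : Fin p, b k ∈ Set.Icc (-1 : ℝ) 1) ∧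
        (∀ pr ∈ D, 0 ≤ (inner ℝ b (q pr.1 - q pr.2) : ℝ)) ∧
        0 < ∑ pr ∈ D, a pr * (inner ℝ b (q pr.1 - q pr.2) : ℝ)) ↔
    (∃ b : EuclideanSpace ℝ (Fin p), b ≠ 0 ∧
        ∀ pr ∈ D, 0 ≤ (inner ℝ b (q pr.1 - q pr.2) : ℝ)) := by
  constructor
  · rintro ⟨b, -, hfeas, hpos⟩
    refine ⟨b, ?_, hfeas⟩
    rintro rfl
    simp at hpos
  · rintro ⟨b, hb, hfeas⟩
    obtain ⟨-, ⟨pr₀, hpr₀, rfl⟩, hpos₀⟩ := exists_inner_pos_of_span_eq_top hspan hb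
      (by rintro _ ⟨pr, hpr, rfl⟩; exact hfeas pr hpr)
    have hnorm : 0 < ‖b‖⁻¹ := inv_pos.mpr (norm_pos_iff.mpr hb)
    refine ⟨‖b‖⁻¹ • b,
      EuclideanSpace.apply_mem_Icc_of_norm_le_one (norm_smul_inv_norm hb).le,
      fun pr hpr => ?_, sum_pos' (fun pr hpr => ?_) ⟨pr₀, hpr₀, ?_⟩⟩ <;>
      simp only [real_inner_smul_left]
    · exact mul_nonneg hnorm.le (hfeas pr hpr)
    · exact mul_nonneg (ha pr hpr).le (mul_nonneg hnorm.le (hfeas pr hpr))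
    · exact mul_pos (ha pr₀ hpr₀) (mul_pos hnorm hpos₀)

/-- Equivalence between a strictly positive optimal value of the linear program
`max ∑_{(i,j)∈D} a_{ij} ⟪b, q i - q j⟫ s.t. b ∈ [-1,1]^p, ⟪b, q i - q j⟫ ≥ 0 on D`
and the existence of a nonzero feasible direction, under the assumption that the
difference vectors `{q i - q j : (i,j) ∈ D}` span the whole space. -/
theorem lp_positive_iff_nonzero_feasible (n p : ℕ) (hn : 1 ≤ n) (hp : 1 ≤ p)
    (q : Fin n → EuclideanSpace ℝ (Fin p))
    (D : Finset (Fin n × Fin n)) (hD : ∀ pr ∈ D, pr.1 ≠ pr.2)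
    (a : Fin n × Fin n → ℝ) (ha : ∀ pr ∈ D, 0 < a pr)
    (hspan : Submodule.span ℝ
      {v : EuclideanSpace ℝ (Fin p) | ∃ pr ∈ D, v = q pr.1 - q pr.2} = ⊤) :
    (∃ b : EuclideanSpace ℝ (Fin p),
        (∀ k : Fin p, b k ∈ Set.Icc (-1 : ℝ) 1) ∧
        (∀ pr ∈ D, 0 ≤ (inner ℝ b (q pr.1 - q pr.2) : ℝ)) ∧
        0 < ∑ pr ∈ D, a pr * (inner ℝ b (q pr.1 - q pr.2) : ℝ)) ↔
    (∃ b : EuclideanSpace ℝ (Fin p), b ≠ 0 ∧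
        ∀ pr ∈ D, 0 ≤ (inner ℝ b (q pr.1 - q pr.2) : ℝ)) :=
  lp_positive_iff_nonzero_feasible_general n p q D a ha hspan
end

section
/- Let b ∈ EuclideanSpace ℝ (Fin p) satisfy ⟪b, q_{i_l} − q_m⟫ ≥ 0 for every l ∈ {1,…,k} and every index m with i_{l−1} ≤ m ≤ i_l − 1, where by convention i_0 = 1. Then ⟪b, q_i − q_j⟫ ≥ 0 for every ordered pair of indices (i,j) with Δ_i = 1 and j < i; that is, the listed i_k − 1 adjacent constraints imply all constraints b^⊤(q_i − q_j) ≥ 0 of the full feasibility system. -/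
/-! Writing `g m = ⟪b, q m⟫`, each constraint says `g j ≤ g i`. By induction on `l`, `g (idx l)`
dominates every earlier value: below the previous uncensored index `idx (l - 1)` go through
`g (idx (l - 1))`, at or after it the adjacent constraints of `idx l` apply directly. -/

theorem apply_le_apply_idx_of_lt {ι α : Type*} [LinearOrder ι] [Preorder α] {k : ℕ}
    {idx : Fin k → ι} (hmono : StrictMono idx) {g : ι → α}
    (hadj : ∀ (l : Fin k) (m : ι), m < idx l → (∀ l' : Fin k, l' < l → idx l' ≤ m) →
      g m ≤ g (idx l)) :
    ∀ (l : Fin k) (j : ι), j < idx l → g j ≤ g (idx l) := by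
  intro l
  obtain ⟨k, rfl⟩ := Nat.exists_eq_add_one_of_ne_zero l.pos.ne'
  induction l using Fin.induction with
  | zero => exact fun j hj => hadj _ j hj fun l' hl' => absurd hl' (Fin.not_lt_zero l')
  | succ l ih =>
    intro j hj
    have hprev : ∀ l' : Fin (k + 1), l' < l.succ → idx l' ≤ idx l.castSucc := fun l' hl' =>
      hmono.monotone (Fin.le_castSucc_iff.mpr hl')
    rcases lt_or_ge (idx l.castSucc) j with hlt | hge
    · exact hadj _ j hj fun l' hl' => (hprev l' hl').trans hlt.le
    · have hstep : g (idx l.castSucc) ≤ g (idx l.succ) :=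
        hadj _ _ (hmono Fin.castSucc_lt_succ) hprev
      rcases hge.lt_or_eq with hj' | rfl
      · exact (ih j hj').trans hstep
      · exact hstep

theorem adjacent_constraints_imply_all_general (n p k : ℕ)
    (q : Fin n → EuclideanSpace ℝ (Fin p))
    (Δ : Fin n → Bool)
    (idx : Fin k → Fin n) (hmono : StrictMono idx)
    (hrange : ∀ i : Fin n, Δ i = true ↔ ∃ l : Fin k, idx l = i)
    (b : EuclideanSpace ℝ (Fin p))
    (hadj : ∀ (l : Fin k) (m : Fin n), m < idx l →
      (∀ l' : Fin k, l' < l → idx l' ≤ m) →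
      0 ≤ (inner ℝ b (q (idx l) - q m) : ℝ)) :
    ∀ i j : Fin n, Δ i = true → j < i → 0 ≤ (inner ℝ b (q i - q j) : ℝ) := by
  intro i j hΔ hji
  obtain ⟨l, rfl⟩ := (hrange i).mp hΔ
  rw [inner_sub_right, sub_nonneg]
  refine apply_le_apply_idx_of_lt (g := fun m => inner ℝ b (q m)) hmono
    (fun l m hm hprev => ?_) l j hji
  simpa only [inner_sub_right, sub_nonneg] using hadj l m hm hprev

/-- Suppose the observations are sorted so that the event times `y` are strictly
decreasing (no ties), and let `idx : Fin k → Fin n` be the strictly increasing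
enumeration of the uncensored indices `{i : Δ i = 1}` (nonempty, so `1 ≤ k`).
If `b` satisfies the adjacent constraints `⟪b, q (idx l) - q m⟫ ≥ 0` for every `l` and
every `m` with `i_{l-1} ≤ m ≤ idx l - 1` (with the convention `i_0 = ` first index,
encoded by requiring `idx l' ≤ m` for all `l' < l`), then `⟪b, q i - q j⟫ ≥ 0` for
every pair with `Δ i = 1` and `j < i`, i.e., the full feasibility system holds. -/
theorem adjacent_constraints_imply_all (n p k : ℕ) (hn : 1 ≤ n) (hp : 1 ≤ p)
    (hk : 1 ≤ k)
    (q : Fin n → EuclideanSpace ℝ (Fin p))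
    (y : Fin n → ℝ) (hy : StrictAnti y)
    (Δ : Fin n → Bool)
    (idx : Fin k → Fin n) (hmono : StrictMono idx)
    (hrange : ∀ i : Fin n, Δ i = true ↔ ∃ l : Fin k, idx l = i)
    (b : EuclideanSpace ℝ (Fin p))
    (hadj : ∀ (l : Fin k) (m : Fin n), m < idx l →
      (∀ l' : Fin k, l' < l → idx l' ≤ m) →
      0 ≤ (inner ℝ b (q (idx l) - q m) : ℝ)) :
    ∀ i j : Fin n, Δ i = true → j < i → 0 ≤ (inner ℝ b (q i - q j) : ℝ) :=
  adjacent_constraints_imply_all_general n p k q Δ idx hmono hrange b hadj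
end

section
/- A vector m = (m_1,…,m_n) ∈ ℝ^n belongs to M if and only if m_i ≤ m_j for every ordered pair of distinct indices (i,j) with Δ_i = 1 and y_j ≥ y_i. In particular, for m ∈ M one has m_i = m_j whenever Δ_i = Δ_j = 1 and y_i = y_j, and no restriction links m_i and m_j when Δ_i·1{y_j ≥ y_i} = 0 and Δ_j·1{y_i ≥ y_j} = 0. -/
open Finset

/-- Membership in the set `M`: for every uncensored index `i ≠ 0` (i.e. `i ≥ 2` in
one-based labelling), `min_{s < i} m s ≥ m i` and `max_{j ∈ D_i} m j ≤ m i`, where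
`D_i = {j < i : y j = y i, Δ j = 1}`. -/
def memM (n : ℕ) (y : Fin n → ℝ) (Δ : Fin n → Bool) (m : Fin n → ℝ) : Prop :=
  ∀ i : Fin n, (i : ℕ) ≠ 0 → Δ i = true →
    (∀ s : Fin n, s < i → m i ≤ m s) ∧
    (∀ j : Fin n, j < i → y j = y i → Δ j = true → m j ≤ m i)

/-- Suppose the event times `y` are nonincreasing in the index and, within any tie,
censored indices precede uncensored ones.  Then `m ∈ M` if and only if `m i ≤ m j`
for every ordered pair of distinct indices with `Δ i = 1` and `y j ≥ y i`.
In particular, for `m ∈ M`, `m i = m j` whenever `Δ i = Δ j = 1` and `y i = y j`. -/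
theorem memM_iff_pairwise (n : ℕ) (hn : 1 ≤ n)
    (y : Fin n → ℝ) (hy : Antitone y) (Δ : Fin n → Bool)
    (hties : ∀ i j : Fin n, y i = y j → Δ i = false → Δ j = true → i < j) :
    (∀ m : Fin n → ℝ, memM n y Δ m ↔
      ∀ i j : Fin n, i ≠ j → Δ i = true → y i ≤ y j → m i ≤ m j) ∧
    (∀ m : Fin n → ℝ, memM n y Δ m →
      ∀ i j : Fin n, Δ i = true → Δ j = true → y i = y j → m i = m j) := by
  have key : ∀ m : Fin n → ℝ, memM n y Δ m ↔
      ∀ i j : Fin n, i ≠ j → Δ i = true → y i ≤ y j → m i ≤ m j := by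
    intro m
    constructor
    · intro hm i j hij hΔi hyij
      rcases lt_or_gt_of_ne hij with hlt | hgt
      · have hyji : y j ≤ y i := hy hlt.le
        have hyeq : y i = y j := le_antisymm hyij hyji
        cases hΔj : Δ j with
        | false =>
          exact absurd (hties j i hyeq.symm hΔj hΔi) (not_lt.mpr hlt.le)
        | true =>
          have hj0 : (j : ℕ) ≠ 0 := by
            have h1 : (i : ℕ) < j := hlt
            omega
          exact (hm j hj0 hΔj).2 i hlt hyeq hΔi
      · have hi0 : (i : ℕ) ≠ 0 := by
          have h1 : (j : ℕ) < i := hgt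
          omega
        exact (hm i hi0 hΔi).1 j hgt
    · intro h i hi0 hΔi
      refine ⟨fun s hs => h i s (ne_of_lt hs).symm hΔi (hy hs.le),
        fun j hj hyj hΔj => h j i (ne_of_lt hj) hΔj (le_of_eq hyj)⟩
  refine ⟨key, fun m hm i j hΔi hΔj hyeq => ?_⟩
  by_cases hij : i = j
  · rw [hij]
  · exact le_antisymm ((key m).1 hm i j hij hΔi hyeq.le)
      ((key m).1 hm j i (Ne.symm hij) hΔj hyeq.ge)
end

section
/- Under the no-ties assumption, M = {m ∈ ℝ^n : m_i ≥ m_{k_i} for every i ∈ G}; that is, a vector m belongs to M if and only if it satisfies the at most n − 1 inequality constraints m_i ≥ m_{k_i}, i ∈ G. -/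
open Finset

/-- Under the no-ties assumption (`y` strictly decreasing in the index), the set
`M = {m : m s ≥ m i for all i with Δ i = 1 and all s < i}` coincides with the set of
vectors satisfying the at most `n - 1` constraints `m i ≥ m (k i)` for `i ∈ G`, where
`k i` is the smallest uncensored index larger than `i` (and `G` is the set of indices
for which such an index exists). -/
theorem M_eq_reduced_constraints (n : ℕ) (hn : 1 ≤ n)
    (y : Fin n → ℝ) (hy : StrictAnti y) (Δ : Fin n → Bool) :
    {m : Fin n → ℝ | ∀ i : Fin n, Δ i = true → ∀ s : Fin n, s < i → m i ≤ m s} =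
    {m : Fin n → ℝ | ∀ i j : Fin n, i < j → Δ j = true →
      (∀ j' : Fin n, i < j' → Δ j' = true → j ≤ j') → m j ≤ m i} := by
  ext m
  simp only [Set.mem_setOf_eq]
  constructor
  · intro h i j hij hΔ _
    exact h j hΔ i hij
  · intro h
    have key : ∀ d : ℕ, ∀ s i : Fin n, i.val - s.val ≤ d → s < i → Δ i = true →
        m i ≤ m s := by
      intro d
      induction d with
      | zero =>
        intro s i hd hsi _
        omega
      | succ d ih =>
        intro s i hd hsi hΔi
        set T : Finset (Fin n) := Finset.univ.filter (fun j' => s < j' ∧ Δ j' = true) with hT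
        have hiT : i ∈ T := by simp [hT, hsi, hΔi]
        have hne : T.Nonempty := ⟨i, hiT⟩
        set j := T.min' hne with hj
        have hjT : j ∈ T := T.min'_mem hne
        have hsj : s < j ∧ Δ j = true := by simpa [hT] using hjT
        have hmin : ∀ j' : Fin n, s < j' → Δ j' = true → j ≤ j' := by
          intro j' h1 h2
          exact T.min'_le j' (by simp [hT, h1, h2])
        have hmjs : m j ≤ m s := h s j hsj.1 hsj.2 hmin
        have hji : j ≤ i := T.min'_le i hiT
        rcases eq_or_lt_of_le hji with heq | hlt
        · rw [heq] at hmjs; exact hmjs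
        · have : i.val - j.val ≤ d := by
            have h1 : s.val < j.val := hsj.1
            have h2 : j.val < i.val := hlt
            omega
          exact le_trans (ih j i this hlt hΔi) hmjs
    intro i hΔ s hsi
    exact key (i.val - s.val) s i le_rfl hsi hΔ
end
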